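/- Assume the channel gains are sorted so that h_1 ≥ h_2 ≥ … ≥ h_K > 0, and consider the relaxed problem obtained from (P2) by dropping the constraint ∑_k b_k·x_k ≥ η·α. Then there exists ℓ ∈ {1, …, K} such that, setting α^(ℓ) = (1/Pmax)·( (∑_{k ≥ ℓ} h_k) / (σ²/Pmax + ∑_{k ≥ ℓ} h_k²) )², the point defined by x_k = 1/h_k² for k ≤ ℓ−1 and x_k = α^(ℓ)·Pmax for k ≥ ℓ satisfies 1/h_k² ≤ α^(ℓ)·Pmax for all k ≤ ℓ−1 and α^(ℓ)·Pmax ≤ 1/h_k² for all k ≥ ℓ, is feasible for the relaxed problem, and minimizes the objective g over the feasible set of the relaxed problem. -/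
import Mathlib


open Finset

/-- Objective of problem (P2). -/
noncomputable def objP2 (K : ℕ) (h : Fin K → ℝ) (σ2 : ℝ)
    (x : Fin K → ℝ) (α : ℝ) : ℝ :=
  ∑ k, (h k) ^ 2 * x k - 2 * ∑ k, h k * Real.sqrt (x k) + α * σ2

/-- Feasibility for the relaxed problem (P2) without the sensing constraint. -/
def FeasP2Relaxed (K : ℕ) (Pmax : ℝ) (x : Fin K → ℝ) (α : ℝ) : Prop :=
  (∀ k, 0 ≤ x k ∧ x k ≤ Pmax * α) ∧ 0 < α

/-- The candidate scaling factor `α^(ℓ)`. -/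
noncomputable def alphaL (K : ℕ) (h : Fin K → ℝ) (σ2 Pmax : ℝ) (ℓ : Fin K) : ℝ :=
  (1 / Pmax) *
    ((∑ k ∈ Finset.univ.filter (fun k => ℓ ≤ k), h k) /
      (σ2 / Pmax + ∑ k ∈ Finset.univ.filter (fun k => ℓ ≤ k), (h k) ^ 2)) ^ 2

/-- The candidate power-allocation point `x^(ℓ)`. -/
noncomputable def xL (K : ℕ) (h : Fin K → ℝ) (σ2 Pmax : ℝ) (ℓ : Fin K) :
    Fin K → ℝ :=
  fun k => if k < ℓ then 1 / (h k) ^ 2 else alphaL K h σ2 Pmax ℓ * Pmax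

/-- Pointwise quadratic bound: `a y − 2 cc √y ≥ −cc²/a`. -/
lemma stmt7_key_quad (a cc y : ℝ) (ha : 0 < a) (hy : 0 ≤ y) :
    -(cc ^ 2) / a ≤ a * y - 2 * cc * Real.sqrt y := by
  obtain ⟨s, hs0, rfl⟩ : ∃ s, 0 ≤ s ∧ y = s ^ 2 :=
    ⟨Real.sqrt y, Real.sqrt_nonneg y, (Real.sq_sqrt hy).symm⟩
  rw [Real.sqrt_sq hs0, div_le_iff₀ ha]
  nlinarith [sq_nonneg (a * s - cc)]

set_option maxHeartbeats 1000000 in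
theorem stmt_7 (K : ℕ) (hK : 1 ≤ K) (h b : Fin K → ℝ)
    (hh : ∀ k, 0 < h k) (hb : ∀ k, 0 < b k)
    (σ2 η Pmax : ℝ) (hσ : 0 < σ2) (hη : 0 < η) (hP : 0 < Pmax)
    (hsorted : ∀ i j : Fin K, i ≤ j → h j ≤ h i) :
    ∃ ℓ : Fin K,
      (∀ k, k < ℓ → 1 / (h k) ^ 2 ≤ alphaL K h σ2 Pmax ℓ * Pmax) ∧
      (∀ k, ℓ ≤ k → alphaL K h σ2 Pmax ℓ * Pmax ≤ 1 / (h k) ^ 2) ∧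
      FeasP2Relaxed K Pmax (xL K h σ2 Pmax ℓ) (alphaL K h σ2 Pmax ℓ) ∧
      (∀ (y : Fin K → ℝ) (β : ℝ), FeasP2Relaxed K Pmax y β →
        objP2 K h σ2 (xL K h σ2 Pmax ℓ) (alphaL K h σ2 Pmax ℓ) ≤
          objP2 K h σ2 y β) := by
  classical
  obtain ⟨n, rfl⟩ : ∃ n, K = n + 1 := ⟨K - 1, by omega⟩
  set c := σ2 / Pmax with hc_def
  have hc : 0 < c := div_pos hσ hP
  set S1 : Fin (n+1) → ℝ := fun ℓ => ∑ k ∈ univ.filter (fun k => ℓ ≤ k), h k with hS1_def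
  set S2 : Fin (n+1) → ℝ := fun ℓ => ∑ k ∈ univ.filter (fun k => ℓ ≤ k), (h k) ^ 2 with hS2_def
  set t : Fin (n+1) → ℝ := fun ℓ => S1 ℓ / (c + S2 ℓ) with ht_def
  have hS2nn : ∀ ℓ, 0 ≤ S2 ℓ := by
    intro ℓ; simp only [hS2_def]
    exact sum_nonneg fun k _ => sq_nonneg _
  have hden : ∀ ℓ, 0 < c + S2 ℓ := fun ℓ => by linarith [hS2nn ℓ]
  have hS1pos : ∀ ℓ, 0 < S1 ℓ := by
    intro ℓ; simp only [hS1_def]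
    exact sum_pos (fun k _ => hh k) ⟨ℓ, by simp⟩
  have ht : ∀ ℓ, 0 < t ℓ := fun ℓ => by
    simp only [ht_def]; exact div_pos (hS1pos ℓ) (hden ℓ)
  have halpha : ∀ ℓ, alphaL (n+1) h σ2 Pmax ℓ = 1 / Pmax * (t ℓ) ^ 2 := by
    intro ℓ; simp only [ht_def, hS1_def, hS2_def, hc_def, alphaL]
  have hAP : ∀ ℓ, alphaL (n+1) h σ2 Pmax ℓ * Pmax = (t ℓ) ^ 2 := by
    intro ℓ; rw [halpha]; field_simp
  -- existence of minimal ℓ with h ℓ * t ℓ ≤ 1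
  set F : Finset (Fin (n+1)) := univ.filter (fun ℓ' => h ℓ' * t ℓ' ≤ 1) with hF_def
  have hFne : F.Nonempty := by
    refine ⟨Fin.last n, ?_⟩
    have hfil : univ.filter (fun k : Fin (n+1) => Fin.last n ≤ k) = {Fin.last n} := by
      ext k; simp [Fin.last_le_iff, eq_comm]
    have h1 : t (Fin.last n) = h (Fin.last n) / (c + (h (Fin.last n)) ^ 2) := by
      simp only [ht_def, hS1_def, hS2_def, hfil, sum_singleton]
    have h2 : h (Fin.last n) * t (Fin.last n) ≤ 1 := by
      rw [h1, ← mul_div_assoc, div_le_one (by nlinarith [sq_nonneg (h (Fin.last n))])]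
      nlinarith [sq_nonneg (h (Fin.last n))]
    simp only [hF_def, mem_filter, mem_univ, true_and]
    exact h2
  set ℓ : Fin (n+1) := F.min' hFne with hℓ_def
  have hℓ1 : h ℓ * t ℓ ≤ 1 := by
    have := F.min'_mem hFne
    simp only [hF_def, mem_filter, mem_univ, true_and] at this
    exact this
  have hmin : ∀ p, p < ℓ → 1 < h p * t p := by
    intro p hp
    by_contra hcon
    push_neg at hcon
    have hpF : p ∈ F := by simp only [hF_def, mem_filter, mem_univ, true_and]; exact hcon
    exact absurd (F.min'_le p hpF) (not_le.mpr hp)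
  have htkey : t ℓ * (c + S2 ℓ) = S1 ℓ := by
    simp only [ht_def]; exact div_mul_cancel₀ _ (hden ℓ).ne'
  -- Fact A
  have hA : ∀ k, ℓ ≤ k → h k * t ℓ ≤ 1 :=
    fun k hk => le_trans (mul_le_mul_of_nonneg_right (hsorted ℓ k hk) (ht ℓ).le) hℓ1
  -- Fact B
  have hB : ∀ k, k < ℓ → 1 < h k * t ℓ := by
    intro k hk
    have hk' : (k : ℕ) < (ℓ : ℕ) := hk
    have hℓpos : 0 < (ℓ : ℕ) := by omega
    set p : Fin (n+1) := ⟨(ℓ : ℕ) - 1, by omega⟩ with hp_def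
    have hpv : (p : ℕ) = (ℓ : ℕ) - 1 := rfl
    have hpℓ : p < ℓ := by rw [Fin.lt_def]; omega
    have hkp : k ≤ p := by rw [Fin.le_def]; omega
    have hins : univ.filter (fun x : Fin (n+1) => p ≤ x)
        = insert p (univ.filter (fun x : Fin (n+1) => ℓ ≤ x)) := by
      ext x
      simp only [mem_filter, mem_univ, true_and, mem_insert, Fin.le_def, Fin.ext_iff]
      omega
    have hpnot : p ∉ univ.filter (fun x : Fin (n+1) => ℓ ≤ x) := by
      simp only [mem_filter, mem_univ, true_and]
      exact not_le.mpr hpℓ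
    have hS1p : S1 p = h p + S1 ℓ := by
      simp only [hS1_def]; rw [hins, sum_insert hpnot]
    have hS2p : S2 p = (h p) ^ 2 + S2 ℓ := by
      simp only [hS2_def]; rw [hins, sum_insert hpnot]
    have h1 := hmin p hpℓ
    have h1' : 1 < h p * (S1 p / (c + S2 p)) := by
      have : t p = S1 p / (c + S2 p) := by simp only [ht_def]
      rwa [this] at h1
    rw [← mul_div_assoc, lt_div_iff₀ (hden p)] at h1'
    rw [hS1p, hS2p] at h1'
    have h3 : c + S2 ℓ < h p * S1 ℓ := by nlinarith [h1']
    have h4 : 1 < h p * t ℓ := by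
      have heq : t ℓ = S1 ℓ / (c + S2 ℓ) := by simp only [ht_def]
      rw [heq, ← mul_div_assoc, lt_div_iff₀ (hden ℓ)]
      linarith
    calc (1:ℝ) < h p * t ℓ := h4
      _ ≤ h k * t ℓ := mul_le_mul_of_nonneg_right (hsorted k p hkp) (ht ℓ).le
  -- threshold conditions
  have hthr1 : ∀ k, k < ℓ → 1 / (h k) ^ 2 ≤ (t ℓ) ^ 2 := by
    intro k hk
    have h1 := hB k hk
    rw [div_le_iff₀ (pow_pos (hh k) 2)]
    nlinarith [h1, (hh k), (ht ℓ)]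
  have hthr2 : ∀ k, ℓ ≤ k → (t ℓ) ^ 2 ≤ 1 / (h k) ^ 2 := by
    intro k hk
    have h1 := hA k hk
    rw [le_div_iff₀ (pow_pos (hh k) 2)]
    nlinarith [h1, mul_nonneg (hh k).le (ht ℓ).le]
  refine ⟨ℓ, ?_, ?_, ?_, ?_⟩
  · intro k hk; rw [hAP]; exact hthr1 k hk
  · intro k hk; rw [hAP]; exact hthr2 k hk
  · constructor
    · intro k
      by_cases hk : k < ℓ
      · refine ⟨by simp only [xL, if_pos hk]; positivity, ?_⟩
        simp only [xL, if_pos hk]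
        rw [mul_comm Pmax, hAP]
        exact hthr1 k hk
      · refine ⟨?_, ?_⟩
        · simp only [xL, if_neg hk]
          rw [hAP]
          positivity
        · simp only [xL, if_neg hk]
          exact le_of_eq (mul_comm _ _)
    · rw [halpha]
      exact mul_pos (by positivity) (pow_pos (ht ℓ) 2)
  · rintro y β ⟨hy, hβ⟩
    -- multipliers
    set μ : Fin (n+1) → ℝ := fun k => if ℓ ≤ k then h k / t ℓ - (h k) ^ 2 else 0 with hμ_def
    have hμ0 : ∀ k, 0 ≤ μ k := by
      intro k
      simp only [hμ_def]
      by_cases hk : ℓ ≤ k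
      · rw [if_pos hk, sub_nonneg, le_div_iff₀ (ht ℓ)]
        nlinarith [hA k hk, hh k]
      · rw [if_neg hk]
    have hμpos : ∀ k, 0 < (h k) ^ 2 + μ k :=
      fun k => add_pos_of_pos_of_nonneg (pow_pos (hh k) 2) (hμ0 k)
    set A : Finset (Fin (n+1)) := univ.filter (fun k => k < ℓ) with hA_def
    set B : Finset (Fin (n+1)) := univ.filter (fun k => ℓ ≤ k) with hB_def
    have hmemA : ∀ {k}, k ∈ A → k < ℓ := by
      intro k hk; simp only [hA_def, mem_filter, mem_univ, true_and] at hk; exact hk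
    have hmemB : ∀ {k}, k ∈ B → ℓ ≤ k := by
      intro k hk; simp only [hB_def, mem_filter, mem_univ, true_and] at hk; exact hk
    have hsplit : ∀ f : Fin (n+1) → ℝ, ∑ k, f k = ∑ k ∈ A, f k + ∑ k ∈ B, f k := by
      intro f
      have h0 := Finset.sum_filter_add_sum_filter_not univ (fun k : Fin (n+1) => k < ℓ) f
      have hBeq : univ.filter (fun k : Fin (n+1) => ¬ k < ℓ) = B := by
        ext k; simp [hB_def, not_lt]
      rw [hBeq] at h0
      rw [← h0, hA_def]
    have hS1B : ∑ k ∈ B, h k = S1 ℓ := by simp only [hS1_def, hB_def]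
    have hS2B : ∑ k ∈ B, (h k) ^ 2 = S2 ℓ := by simp only [hS2_def, hB_def]
    -- sum of multipliers is c
    have hμsum : ∑ k, μ k = c := by
      rw [hsplit μ]
      have hA0 : ∑ k ∈ A, μ k = 0 :=
        sum_eq_zero fun k hk => by
          simp only [hμ_def]; exact if_neg (not_le.mpr (hmemA hk))
      have hB0 : ∑ k ∈ B, μ k = ∑ k ∈ B, (h k / t ℓ - (h k) ^ 2) :=
        sum_congr rfl fun k hk => by
          simp only [hμ_def]; exact if_pos (hmemB hk)
      rw [hA0, hB0, zero_add, sum_sub_distrib, ← sum_div, hS1B, hS2B]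
      have hS1t : S1 ℓ / t ℓ = c + S2 ℓ := by
        rw [← htkey, mul_comm, mul_div_assoc, div_self (ht ℓ).ne', mul_one]
      rw [hS1t]; ring
    -- value of objective at the candidate point
    have hxA : ∀ k, k < ℓ → xL (n+1) h σ2 Pmax ℓ k = 1 / (h k) ^ 2 := by
      intro k hk; simp only [xL, if_pos hk]
    have hxB : ∀ k, ¬ k < ℓ → xL (n+1) h σ2 Pmax ℓ k = (t ℓ) ^ 2 := by
      intro k hk; simp only [xL, if_neg hk]; exact hAP ℓ
    have e1 : ∑ k, (h k) ^ 2 * xL (n+1) h σ2 Pmax ℓ k = (A.card : ℝ) + S2 ℓ * (t ℓ) ^ 2 := by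
      rw [hsplit]
      have hA1 : ∑ k ∈ A, (h k) ^ 2 * xL (n+1) h σ2 Pmax ℓ k = ∑ k ∈ A, (1:ℝ) :=
        sum_congr rfl fun k hk => by
          rw [hxA k (hmemA hk), mul_one_div, div_self (pow_ne_zero 2 (hh k).ne')]
      have hB1 : ∑ k ∈ B, (h k) ^ 2 * xL (n+1) h σ2 Pmax ℓ k = ∑ k ∈ B, (h k) ^ 2 * (t ℓ) ^ 2 :=
        sum_congr rfl fun k hk => by
          rw [hxB k (not_lt.mpr (hmemB hk))]
      rw [hA1, hB1, sum_const, ← sum_mul, hS2B, nsmul_eq_mul, mul_one]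
    have e2 : ∑ k, h k * Real.sqrt (xL (n+1) h σ2 Pmax ℓ k) = (A.card : ℝ) + S1 ℓ * t ℓ := by
      rw [hsplit]
      have hA1 : ∑ k ∈ A, h k * Real.sqrt (xL (n+1) h σ2 Pmax ℓ k) = ∑ k ∈ A, (1:ℝ) :=
        sum_congr rfl fun k hk => by
          rw [hxA k (hmemA hk)]
          rw [show (1:ℝ) / (h k) ^ 2 = (1 / h k) ^ 2 by ring,
            Real.sqrt_sq (one_div_nonneg.mpr (hh k).le),
            mul_one_div, div_self (hh k).ne']
      have hB1 : ∑ k ∈ B, h k * Real.sqrt (xL (n+1) h σ2 Pmax ℓ k) = ∑ k ∈ B, h k * t ℓ :=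
        sum_congr rfl fun k hk => by
          rw [hxB k (not_lt.mpr (hmemB hk)), Real.sqrt_sq (ht ℓ).le]
      rw [hA1, hB1, sum_const, ← sum_mul, hS1B, nsmul_eq_mul, mul_one]
    have e3 : alphaL (n+1) h σ2 Pmax ℓ * σ2 = (t ℓ) ^ 2 * c := by
      rw [halpha ℓ, hc_def]
      field_simp
    have hobjx : objP2 (n+1) h σ2 (xL (n+1) h σ2 Pmax ℓ) (alphaL (n+1) h σ2 Pmax ℓ)
        = -(A.card : ℝ) - S1 ℓ * t ℓ := by
      simp only [objP2]
      rw [e1, e2, e3]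
      linear_combination (t ℓ) * htkey
    -- sum of the per-coordinate lower bounds equals the candidate value
    have hm : ∑ k, -((h k) ^ 2) / ((h k) ^ 2 + μ k) = -(A.card : ℝ) - S1 ℓ * t ℓ := by
      rw [hsplit]
      have hA1 : ∑ k ∈ A, -((h k) ^ 2) / ((h k) ^ 2 + μ k) = ∑ k ∈ A, (-1 : ℝ) :=
        sum_congr rfl fun k hk => by
          have hz : μ k = 0 := by
            simp only [hμ_def]; exact if_neg (not_le.mpr (hmemA hk))
          rw [hz, add_zero, neg_div, div_self (pow_ne_zero 2 (hh k).ne')]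
      have hB1 : ∑ k ∈ B, -((h k) ^ 2) / ((h k) ^ 2 + μ k) = ∑ k ∈ B, -(h k * t ℓ) :=
        sum_congr rfl fun k hk => by
          have hz : μ k = h k / t ℓ - (h k) ^ 2 := by
            simp only [hμ_def]; exact if_pos (hmemB hk)
          have h1 : (h k) ≠ 0 := (hh k).ne'
          rw [hz, show (h k) ^ 2 + (h k / t ℓ - (h k) ^ 2) = h k / t ℓ by ring,
            div_div_eq_mul_div, div_eq_iff h1]
          ring
      have hBneg : ∑ k ∈ B, -(h k * t ℓ) = -(S1 ℓ * t ℓ) := by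
        rw [Finset.sum_neg_distrib, ← sum_mul, hS1B]
      rw [hA1, hB1, sum_const, nsmul_eq_mul, mul_neg_one, hBneg]
      ring
    -- chain of inequalities
    have hmid : ∑ k, -((h k) ^ 2) / ((h k) ^ 2 + μ k)
        ≤ ∑ k, (((h k) ^ 2 + μ k) * y k - 2 * h k * Real.sqrt (y k)) :=
      sum_le_sum fun k _ => stmt7_key_quad _ _ _ (hμpos k) (hy k).1
    have hμy : ∑ k, μ k * y k ≤ β * σ2 := by
      calc ∑ k, μ k * y k ≤ ∑ k, μ k * (Pmax * β) :=
            sum_le_sum fun k _ => mul_le_mul_of_nonneg_left (hy k).2 (hμ0 k)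
        _ = (∑ k, μ k) * (Pmax * β) := by rw [← sum_mul]
        _ = c * (Pmax * β) := by rw [hμsum]
        _ = β * σ2 := by rw [hc_def]; field_simp
    have hupper : ∑ k, (((h k) ^ 2 + μ k) * y k - 2 * h k * Real.sqrt (y k))
        ≤ objP2 (n+1) h σ2 y β := by
      have hpt : ∀ k : Fin (n+1), ((h k) ^ 2 + μ k) * y k - 2 * h k * Real.sqrt (y k)
          = ((h k) ^ 2 * y k - 2 * (h k * Real.sqrt (y k))) + μ k * y k := fun k => by ring
      have hs : ∑ k, (((h k) ^ 2 + μ k) * y k - 2 * h k * Real.sqrt (y k))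
          = ((∑ k, (h k) ^ 2 * y k) - 2 * ∑ k, h k * Real.sqrt (y k)) + ∑ k, μ k * y k := by
        rw [sum_congr rfl fun k _ => hpt k, sum_add_distrib, sum_sub_distrib, ← mul_sum]
      simp only [objP2]
      rw [hs]
      linarith [hμy]
    calc objP2 (n+1) h σ2 (xL (n+1) h σ2 Pmax ℓ) (alphaL (n+1) h σ2 Pmax ℓ)
        = ∑ k, -((h k) ^ 2) / ((h k) ^ 2 + μ k) := hobjx.trans hm.symm
      _ ≤ ∑ k, (((h k) ^ 2 + μ k) * y k - 2 * h k * Real.sqrt (y k)) := hmid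
      _ ≤ objP2 (n+1) h σ2 y β := hupper
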